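/- (General sensitivity bound) Let f : 2^E → ℕ be an integral polymatroid rank function and let every C_e : ℕ×ℕ → ℝ≥0 be regular. Let t, t' ∈ ℕ^E and d, d' ∈ ℕ with B_f(d) ≠ ∅ ≠ B_f(d'). Then for every optimal solution x of P(t,d) there exists an optimal solution x' of P(t',d') with ‖x − x'‖ ≤ 2‖t − t'‖ + |d − d'|. -/
import Mathlib


open Finset

/-- Indicator vector of an element. -/
def chi {E : Type*} [DecidableEq E] (e : E) : E → ℕ := fun e' => if e' = e then 1 else 0

/-- Integral polymatroid rank function: normalized, monotone, submodular. -/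
def IsPolymatroidRank {E : Type*} [Fintype E] [DecidableEq E] (f : Finset E → ℕ) : Prop :=
  f ∅ = 0 ∧ (∀ U V : Finset E, U ⊆ V → f U ≤ f V) ∧
    (∀ U V : Finset E, f (U ∪ V) + f (U ∩ V) ≤ f U + f V)

/-- The integral polymatroid base polytope `B_f(d)`. -/
def Base {E : Type*} [Fintype E] (f : Finset E → ℕ) (d : ℕ) : Set (E → ℕ) :=
  {x | (∀ U : Finset E, ∑ e ∈ U, x e ≤ f U) ∧ ∑ e, x e = d}

/-- Regularity of a parametrized cost function: the left discrete derivative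
`C⁻(x;t) = C(x;t) - C(x-1;t)` (for `x ≥ 1`) satisfies both
`C⁻(x;t) ≤ C⁻(x;t+1)` and `C⁻(x;t+1) ≤ C⁻(x+1;t)`. -/
def Regular (C : ℕ → ℕ → ℝ) : Prop :=
  ∀ x t : ℕ, 1 ≤ x →
    C x t - C (x - 1) t ≤ C x (t + 1) - C (x - 1) (t + 1) ∧
    C x (t + 1) - C (x - 1) (t + 1) ≤ C (x + 1) t - C x t

/-- The objective `Σ_{e ∈ E} C_e(x_e; t_e)` of problem `P(t,d)`. -/
def totalCost {E : Type*} [Fintype E] (C : E → ℕ → ℕ → ℝ) (t : E → ℕ) (x : E → ℕ) : ℝ :=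
  ∑ e, C e (x e) (t e)

/-- An optimal solution of `P(t,d)`: minimize `Σ_e C_e(x_e;t_e)` over `B_f(d)`. -/
def IsOptimal {E : Type*} [Fintype E] (f : Finset E → ℕ) (C : E → ℕ → ℕ → ℝ)
    (t : E → ℕ) (d : ℕ) (x : E → ℕ) : Prop :=
  x ∈ Base f d ∧ ∀ y ∈ Base f d, totalCost C t x ≤ totalCost C t y

/-- The `L1`-distance `‖u - v‖ = Σ_e |u_e - v_e|` of two vectors in `ℕ^E`. -/
def l1 {E : Type*} [Fintype E] (u v : E → ℕ) : ℕ :=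
  ∑ e, ((u e : ℤ) - (v e : ℤ)).natAbs

set_option linter.unusedSectionVars false
set_option maxHeartbeats 1000000

def Feas {E : Type*} [Fintype E] [DecidableEq E] (f : Finset E → ℕ) (x : E → ℕ) : Prop :=
  ∀ U : Finset E, ∑ e ∈ U, x e ≤ f U

/-- move: increase at `i`, decrease at `j`. -/
def mv {E : Type*} [DecidableEq E] (y : E → ℕ) (i j : E) : E → ℕ :=
  fun a => if a = i then y a + 1 else if a = j then y a - 1 else y a

section Aux
variable {E : Type*} [Fintype E] [DecidableEq E]

lemma tight_union {f : Finset E → ℕ} (hf : IsPolymatroidRank f) {x : E → ℕ} (hx : Feas f x)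
    {A B : Finset E} (hA : ∑ e ∈ A, x e = f A) (hB : ∑ e ∈ B, x e = f B) :
    ∑ e ∈ A ∪ B, x e = f (A ∪ B) ∧ ∑ e ∈ A ∩ B, x e = f (A ∩ B) := by
  have h1 : ∑ e ∈ A ∪ B, x e + ∑ e ∈ A ∩ B, x e = ∑ e ∈ A, x e + ∑ e ∈ B, x e :=
    Finset.sum_union_inter
  have h2 := hf.2.2 A B
  have h3 := hx (A ∪ B)
  have h4 := hx (A ∩ B)
  omega

lemma mv_sum_int {y : E → ℕ} {i j : E} (hij : i ≠ j) (hj : 1 ≤ y j) (U : Finset E) :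
    (∑ a ∈ U, (mv y i j a : ℤ)) =
      ∑ a ∈ U, (y a : ℤ) + (if i ∈ U then 1 else 0) - (if j ∈ U then 1 else 0) := by
  have key : ∀ a ∈ U, (mv y i j a : ℤ) = (y a : ℤ) + (if a = i then 1 else 0) - (if a = j then 1 else 0) := by
    intro a _
    unfold mv
    by_cases h1 : a = i
    · subst h1; simp [hij]
    · by_cases h2 : a = j
      · subst h2
        simp only [h1, if_false, if_pos rfl]
        push_cast [hj]
        ring
      · simp [h1, h2]
  rw [Finset.sum_congr rfl key, Finset.sum_sub_distrib, Finset.sum_add_distrib]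
  congr 1
  · congr 1
    · simp [Finset.sum_ite_eq' U i (fun _ => (1:ℤ))]
  · simp [Finset.sum_ite_eq' U j (fun _ => (1:ℤ))]

lemma mv_feas {f : Finset E → ℕ} {y : E → ℕ} (hy : Feas f y) {i j : E} (hij : i ≠ j)
    (hj : 1 ≤ y j)
    (hT : ∀ U : Finset E, ∑ e ∈ U, y e = f U → i ∈ U → j ∈ U) :
    Feas f (mv y i j) := by
  intro U
  have h := mv_sum_int hij hj U
  have hU := hy U
  by_cases hi : i ∈ U
  · by_cases hjU : j ∈ U
    · have : (∑ a ∈ U, (mv y i j a : ℤ)) = ∑ a ∈ U, (y a : ℤ) := by rw [h]; simp [hi, hjU]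
      have : (∑ a ∈ U, mv y i j a : ℤ) ≤ (f U : ℤ) := by push_cast at this ⊢; rw [this]; exact_mod_cast hU
      exact_mod_cast this
    · -- i ∈ U, j ∉ U : U cannot be tight
      have hnt : ∑ e ∈ U, y e ≠ f U := fun ht => hjU (hT U ht hi)
      have hlt : ∑ e ∈ U, y e + 1 ≤ f U := by omega
      have : (∑ a ∈ U, (mv y i j a : ℤ)) = ∑ a ∈ U, (y a : ℤ) + 1 := by rw [h]; simp [hi, hjU]
      have : (∑ a ∈ U, mv y i j a : ℤ) ≤ (f U : ℤ) := by
        push_cast at this ⊢; rw [this]; exact_mod_cast hlt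
      exact_mod_cast this
  · have : (∑ a ∈ U, (mv y i j a : ℤ)) ≤ ∑ a ∈ U, (y a : ℤ) := by
      rw [h]; simp only [hi, if_false]; split <;> omega
    have : (∑ a ∈ U, mv y i j a : ℤ) ≤ (f U : ℤ) := le_trans this (by exact_mod_cast hU)
    exact_mod_cast this

lemma mv_sum_univ {y : E → ℕ} {i j : E} (hij : i ≠ j) (hj : 1 ≤ y j) :
    ∑ a, mv y i j a = ∑ a, y a := by
  have h := mv_sum_int hij hj (univ : Finset E)
  simp only [Finset.mem_univ, if_true] at h
  have : (∑ a, (mv y i j a : ℤ)) = ∑ a, (y a : ℤ) := by rw [h]; ring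
  exact_mod_cast this


/-- The simultaneous exchange lemma. -/
lemma exch {f : Finset E → ℕ} (hf : IsPolymatroidRank f) {u v : E → ℕ}
    (hu : Feas f u) (hv : Feas f v)
    (hsum : ∑ e, u e ≤ ∑ e, v e) (a : E) (ha : v a < u a) :
    ∃ b, u b < v b ∧ (∀ U : Finset E, ∑ e ∈ U, u e = f U → b ∈ U → a ∈ U) ∧
      (∀ U : Finset E, ∑ e ∈ U, v e = f U → a ∈ U → b ∈ U) := by
  by_contra hcon
  push_neg at hcon
  -- from hcon we extract, for each bad b, a witness u-tight set avoiding a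
  -- (whenever the v-side condition holds for b)
  by_cases hT : ∃ V : Finset E, (∑ e ∈ V, v e = f V) ∧ a ∈ V
  · -- Case 1: some v-tight set contains a; take the minimal one T
    set 𝒱 : Finset (Finset E) :=
      univ.powerset.filter (fun V => (∑ e ∈ V, v e = f V) ∧ a ∈ V) with h𝒱
    have h𝒱ne : 𝒱.Nonempty := by
      obtain ⟨V, hV1, hV2⟩ := hT
      exact ⟨V, by simp [h𝒱, hV1, hV2]⟩
    set T : Finset E := 𝒱.inf' h𝒱ne id with hTdef
    have hTmem : ∀ V ∈ 𝒱, T ⊆ V := by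
      intro V hV x hx
      rw [hTdef] at hx
      exact (Finset.mem_inf' h𝒱ne).mp hx V hV
    have hTtight : (∑ e ∈ T, v e = f T) ∧ a ∈ T := by
      have := Finset.inf'_mem (α := Finset E)
        {U : Finset E | (∑ e ∈ U, v e = f U) ∧ a ∈ U}
        (fun X hX Y hY => ⟨(tight_union hf hv hX.1 hY.1).2, Finset.mem_inter.mpr ⟨hX.2, hY.2⟩⟩)
        𝒱 h𝒱ne id
        (fun V hV => by
          simp only [h𝒱, Finset.mem_filter] at hV
          exact ⟨hV.2.1, hV.2.2⟩)
      exact this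
    -- D : elements of T where u < v
    set D : Finset E := T.filter (fun b => u b < v b) with hD
    have hch : ∀ b ∈ D, ∃ U : Finset E, (∑ e ∈ U, u e = f U) ∧ b ∈ U ∧ a ∉ U := by
      intro b hb
      simp only [hD, Finset.mem_filter] at hb
      have hC : ∀ U : Finset E, ∑ e ∈ U, v e = f U → a ∈ U → b ∈ U := by
        intro U h1 h2
        exact hTmem U (by simp [h𝒱, h1, h2]) hb.1
      have hmain := hcon b hb.2
      have hnB : ¬ (∀ U : Finset E, ∑ e ∈ U, u e = f U → b ∈ U → a ∈ U) := by
        intro hB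
        obtain ⟨V, hV1, hV2, hV3⟩ := hmain hB
        exact hV3 (hC V hV1 hV2)
      rcases not_forall.mp hnB with ⟨U, hU⟩
      push_neg at hU
      exact ⟨U, hU.1, hU.2⟩
    choose g hg using hch
    set W : Finset E := D.attach.sup (fun b => g b.1 b.2) with hW
    have hWtight : ∑ e ∈ W, u e = f W := by
      apply Finset.sup_induction (p := fun U => ∑ e ∈ U, u e = f U)
      · simpa using hf.1.symm
      · intro A hA B hB; exact (tight_union hf hu hA hB).1
      · intro b _; exact (hg b.1 b.2).1
    have haW : a ∉ W := by
      rw [hW, Finset.mem_sup]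
      rintro ⟨b, _, hab⟩
      exact (hg b.1 b.2).2.2 hab
    have hDW : D ⊆ W := by
      intro b hb
      have : g b hb ≤ W := Finset.le_sup (f := fun b : {x // x ∈ D} => g b.1 b.2)
        (Finset.mem_attach D ⟨b, hb⟩)
      exact this (hg b hb).2.1
    -- arithmetic contradiction
    have haTW : a ∈ T \ W := Finset.mem_sdiff.mpr ⟨hTtight.2, haW⟩
    have h1 : ∑ e ∈ T \ W, v e < ∑ e ∈ T \ W, u e := by
      apply Finset.sum_lt_sum
      · intro c hc
        rcases Finset.mem_sdiff.mp hc with ⟨hcT, hcW⟩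
        by_contra hlt
        exact hcW (hDW (by simp [hD, hcT]; omega))
      · exact ⟨a, haTW, ha⟩
    have h2 : ∑ e ∈ T \ W, v e + ∑ e ∈ T ∩ W, v e = f T := by
      rw [← hTtight.1, ← Finset.sdiff_inter_self_left T W]
      exact Finset.sum_sdiff (Finset.inter_subset_left)
    have h3 : ∑ e ∈ T ∪ W, u e = ∑ e ∈ T \ W, u e + ∑ e ∈ W, u e := by
      rw [← Finset.sum_union (Finset.sdiff_disjoint)]
      congr 1
      rw [Finset.sdiff_union_self_eq_union]
    have h4 := hu (T ∪ W)
    have h5 := hv (T ∩ W)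
    have h6 := hf.2.2 T W
    omega
  · -- Case 2: no v-tight set contains a
    push_neg at hT
    set N : Finset E := univ.filter (fun b => u b < v b) with hN
    have hch : ∀ b ∈ N, ∃ U : Finset E, (∑ e ∈ U, u e = f U) ∧ b ∈ U ∧ a ∉ U := by
      intro b hb
      simp only [hN, Finset.mem_filter] at hb
      have hC : ∀ U : Finset E, ∑ e ∈ U, v e = f U → a ∈ U → b ∈ U := by
        intro U h1 h2; exact absurd h2 (hT U h1)
      have hmain := hcon b hb.2
      have hnB : ¬ (∀ U : Finset E, ∑ e ∈ U, u e = f U → b ∈ U → a ∈ U) := by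
        intro hB
        obtain ⟨V, hV1, hV2, hV3⟩ := hmain hB
        exact hV3 (hC V hV1 hV2)
      rcases not_forall.mp hnB with ⟨U, hU⟩
      push_neg at hU
      exact ⟨U, hU.1, hU.2⟩
    choose g hg using hch
    set W : Finset E := N.attach.sup (fun b => g b.1 b.2) with hW
    have hWtight : ∑ e ∈ W, u e = f W := by
      apply Finset.sup_induction (p := fun U => ∑ e ∈ U, u e = f U)
      · simpa using hf.1.symm
      · intro A hA B hB; exact (tight_union hf hu hA hB).1
      · intro b _; exact (hg b.1 b.2).1
    have haW : a ∉ W := by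
      rw [hW, Finset.mem_sup]
      rintro ⟨b, _, hab⟩
      exact (hg b.1 b.2).2.2 hab
    have hNW : N ⊆ W := by
      intro b hb
      have : g b hb ≤ W := Finset.le_sup (f := fun b : {x // x ∈ N} => g b.1 b.2)
        (Finset.mem_attach N ⟨b, hb⟩)
      exact this (hg b hb).2.1
    have h1 : ∑ e ∈ W, v e ≤ ∑ e ∈ W, u e := by rw [hWtight]; exact hv W
    have h2 : ∑ e ∈ univ \ W, v e < ∑ e ∈ univ \ W, u e := by
      apply Finset.sum_lt_sum
      · intro c hc
        rcases Finset.mem_sdiff.mp hc with ⟨-, hcW⟩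
        by_contra hlt
        exact hcW (hNW (by simp [hN]; omega))
      · exact ⟨a, Finset.mem_sdiff.mpr ⟨Finset.mem_univ a, haW⟩, ha⟩
    have h3 : ∑ e ∈ univ \ W, u e + ∑ e ∈ W, u e = ∑ e, u e :=
      Finset.sum_sdiff (Finset.subset_univ W)
    have h4 : ∑ e ∈ univ \ W, v e + ∑ e ∈ W, v e = ∑ e, v e :=
      Finset.sum_sdiff (Finset.subset_univ W)
    omega

-- Regularity helpers
lemma reg_step {c : ℕ → ℕ → ℝ} (hc : Regular c) {x : ℕ} (t : ℕ) (hx : 1 ≤ x) :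
    c x t - c (x - 1) t ≤ c (x + 1) t - c x t :=
  le_trans (hc x t hx).1 (hc x t hx).2

lemma reg_mono {c : ℕ → ℕ → ℝ} (hc : Regular c) {a b : ℕ} (t : ℕ) (ha : 1 ≤ a) (hab : a ≤ b) :
    c a t - c (a - 1) t ≤ c b t - c (b - 1) t := by
  induction b, hab using Nat.le_induction with
  | base => exact le_rfl
  | succ b hb ih =>
    refine le_trans ih (le_trans (reg_step hc t (le_trans ha hb)) ?_)
    simp

-- cost of a move
lemma cost_mv (C : E → ℕ → ℕ → ℝ) (t : E → ℕ) (y : E → ℕ) {i j : E} (hij : i ≠ j) :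
    totalCost C t (mv y i j) = totalCost C t y
      + (C i (y i + 1) (t i) - C i (y i) (t i))
      - (C j (y j) (t j) - C j (y j - 1) (t j)) := by
  have hsub : ({i, j} : Finset E) ⊆ univ := Finset.subset_univ _
  have h1 := Finset.sum_sdiff (f := fun e => C e (mv y i j e) (t e)) hsub
  have h2 := Finset.sum_sdiff (f := fun e => C e (y e) (t e)) hsub
  have h3 : ∑ e ∈ univ \ {i, j}, C e (mv y i j e) (t e)
      = ∑ e ∈ univ \ {i, j}, C e (y e) (t e) := by
    apply Finset.sum_congr rfl
    intro e he
    rcases Finset.mem_sdiff.mp he with ⟨-, he2⟩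
    simp only [Finset.mem_insert, Finset.mem_singleton] at he2
    push_neg at he2
    simp [mv, he2.1, he2.2]
  have h4 : ∑ e ∈ ({i, j} : Finset E), C e (mv y i j e) (t e)
      = C i (mv y i j i) (t i) + C j (mv y i j j) (t j) := Finset.sum_pair hij
  have h5 : ∑ e ∈ ({i, j} : Finset E), C e (y e) (t e)
      = C i (y i) (t i) + C j (y j) (t j) := Finset.sum_pair hij
  have e1 : mv y i j i = y i + 1 := by simp [mv]
  have e2 : mv y i j j = y j - 1 := by simp [mv, Ne.symm hij]
  rw [e1, e2] at h4
  unfold totalCost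
  linarith [h1, h2]

lemma l1_mv (x x' : E → ℕ) {i j : E} (hij : i ≠ j) (hi : x' i < x i) (hj : x j < x' j) :
    l1 x (mv x' i j) + 2 = l1 x x' := by
  have hsub : ({i, j} : Finset E) ⊆ univ := Finset.subset_univ _
  have h1 := Finset.sum_sdiff (f := fun e => ((x e : ℤ) - (mv x' i j e : ℤ)).natAbs) hsub
  have h2 := Finset.sum_sdiff (f := fun e => ((x e : ℤ) - (x' e : ℤ)).natAbs) hsub
  have h3 : ∑ e ∈ univ \ {i, j}, ((x e : ℤ) - (mv x' i j e : ℤ)).natAbs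
      = ∑ e ∈ univ \ {i, j}, ((x e : ℤ) - (x' e : ℤ)).natAbs := by
    apply Finset.sum_congr rfl
    intro e he
    rcases Finset.mem_sdiff.mp he with ⟨-, he2⟩
    simp only [Finset.mem_insert, Finset.mem_singleton] at he2
    push_neg at he2
    simp [mv, he2.1, he2.2]
  have h4 : ∑ e ∈ ({i, j} : Finset E), ((x e : ℤ) - (mv x' i j e : ℤ)).natAbs
      = ((x i : ℤ) - (mv x' i j i : ℤ)).natAbs + ((x j : ℤ) - (mv x' i j j : ℤ)).natAbs :=
    Finset.sum_pair hij
  have h5 : ∑ e ∈ ({i, j} : Finset E), ((x e : ℤ) - (x' e : ℤ)).natAbs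
      = ((x i : ℤ) - (x' i : ℤ)).natAbs + ((x j : ℤ) - (x' j : ℤ)).natAbs :=
    Finset.sum_pair hij
  have e1 : mv x' i j i = x' i + 1 := by simp [mv]
  have e2 : mv x' i j j = x' j - 1 := by simp [mv, Ne.symm hij]
  have t1 : ((x i : ℤ) - (mv x' i j i : ℤ)).natAbs + 1 = ((x i : ℤ) - (x' i : ℤ)).natAbs := by
    rw [e1]; push_cast; omega
  have t2 : ((x j : ℤ) - (mv x' i j j : ℤ)).natAbs + 1 = ((x j : ℤ) - (x' j : ℤ)).natAbs := by
    rw [e2]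
    have hj1 : (1 : ℕ) ≤ x' j := by omega
    push_cast [hj1]
    omega
  unfold l1
  omega

lemma l1_triangle (u v w : E → ℕ) : l1 u w ≤ l1 u v + l1 v w := by
  unfold l1
  rw [← Finset.sum_add_distrib]
  apply Finset.sum_le_sum
  intro e _
  omega

lemma l1_eq_zero {u v : E → ℕ} (h : l1 u v = 0) : u = v := by
  funext e
  unfold l1 at h
  have := Finset.sum_eq_zero_iff.mp h e (Finset.mem_univ e)
  omega

lemma base_finite (f : Finset E → ℕ) (d : ℕ) : (Base f d).Finite := by
  apply Set.Finite.subset (Set.finite_Icc (fun _ : E => 0) (fun _ : E => d))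
  intro y hy
  rw [Set.mem_Icc]
  refine ⟨fun e => Nat.zero_le _, fun e => ?_⟩
  calc y e ≤ ∑ a, y a := Finset.single_le_sum (fun a _ => Nat.zero_le (y a)) (Finset.mem_univ e)
  _ = d := hy.2

lemma exists_opt_min (f : Finset E → ℕ) (C : E → ℕ → ℕ → ℝ) (t : E → ℕ) (d : ℕ)
    (h : (Base f d).Nonempty) (x₀ : E → ℕ) :
    ∃ x', IsOptimal f C t d x' ∧ ∀ z, IsOptimal f C t d z → l1 x₀ x' ≤ l1 x₀ z := by
  classical
  set s := (base_finite f d).toFinset with hs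
  have hsne : s.Nonempty := by
    obtain ⟨w, hw⟩ := h
    exact ⟨w, by simp [hs, hw]⟩
  obtain ⟨m, hm, hmmin⟩ := Finset.exists_min_image s (totalCost C t) hsne
  set sOpt := s.filter (fun z => totalCost C t z ≤ totalCost C t m) with hsOpt
  have hmOpt : m ∈ sOpt := by simp [hsOpt, hm]
  obtain ⟨x', hx', hx'min⟩ := Finset.exists_min_image sOpt (l1 x₀) ⟨m, hmOpt⟩
  simp only [hsOpt, Finset.mem_filter, hs, Set.Finite.mem_toFinset] at hx'
  have hopt : IsOptimal f C t d x' := by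
    refine ⟨hx'.1, fun z hz => ?_⟩
    have hzs : z ∈ s := by simp [hs, hz]
    exact le_trans hx'.2 (hmmin z hzs)
  refine ⟨x', hopt, fun z hz => ?_⟩
  apply hx'min
  simp only [hsOpt, Finset.mem_filter, hs, Set.Finite.mem_toFinset]
  exact ⟨hz.1, hz.2 m (by simpa [hs, Set.Finite.mem_toFinset] using hm)⟩

lemma base_nonempty_mono (f : Finset E → ℕ) {m d : ℕ} (h : m ≤ d)
    (hd : (Base f d).Nonempty) : (Base f m).Nonempty := by
  induction d with
  | zero => exact (Nat.le_zero.mp h) ▸ hd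
  | succ n ih =>
    rcases Nat.lt_or_ge m (n + 1) with hlt | hge
    · apply ih (by omega)
      obtain ⟨y, hy1, hy2⟩ := hd
      have hex : ∃ e, 1 ≤ y e := by
        by_contra hc
        push_neg at hc
        have : ∑ e, y e = 0 := Finset.sum_eq_zero (fun e _ => by have := hc e; omega)
        omega
      obtain ⟨e, he⟩ := hex
      refine ⟨Function.update y e (y e - 1), fun U => ?_, ?_⟩
      · refine le_trans (Finset.sum_le_sum fun a _ => ?_) (hy1 U)
        by_cases hae : a = e
        · subst hae; simp
        · simp [Function.update, hae]
      · have h1 : ∑ a, Function.update y e (y e - 1) a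
            = ∑ a ∈ univ.erase e, y a + (y e - 1) := by
          rw [Finset.sum_update_of_mem (Finset.mem_univ e),
            Finset.sdiff_singleton_eq_erase, add_comm]
        have h2 : ∑ a ∈ univ.erase e, y a + y e = ∑ a, y a :=
          Finset.sum_erase_add univ y (Finset.mem_univ e)
        omega
    · have : m = n + 1 := by omega
      exact this ▸ hd


lemma step_d_up {f : Finset E → ℕ} (hf : IsPolymatroidRank f) {C : E → ℕ → ℕ → ℝ}
    (hreg : ∀ e, Regular (C e)) {t : E → ℕ} {d : ℕ} {x : E → ℕ}
    (hx : IsOptimal f C t d x) (hne : (Base f (d + 1)).Nonempty) :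
    ∃ x', IsOptimal f C t (d + 1) x' ∧ l1 x x' ≤ 1 := by
  obtain ⟨x', hopt, hmin⟩ := exists_opt_min f C t (d + 1) hne x
  refine ⟨x', hopt, ?_⟩
  have hle : ∀ e, x e ≤ x' e := by
    by_contra hc
    push_neg at hc
    obtain ⟨a, ha⟩ := hc
    have hsum : ∑ e, x e ≤ ∑ e, x' e := by rw [hx.1.2, hopt.1.2]; omega
    obtain ⟨b, hb, hbu, hbv⟩ := exch hf hx.1.1 hopt.1.1 hsum a ha
    have hab : a ≠ b := by intro h; subst h; omega
    have hxa1 : 1 ≤ x a := by omega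
    have hx'b1 : 1 ≤ x' b := by omega
    have hxmv : mv x b a ∈ Base f d :=
      ⟨mv_feas hx.1.1 (Ne.symm hab) hxa1 hbu,
        by rw [mv_sum_univ (Ne.symm hab) hxa1]; exact hx.1.2⟩
    have hx'mv : mv x' a b ∈ Base f (d + 1) :=
      ⟨mv_feas hopt.1.1 hab hx'b1 hbv, by rw [mv_sum_univ hab hx'b1]; exact hopt.1.2⟩
    have c1 : totalCost C t x ≤ totalCost C t (mv x b a) := hx.2 _ hxmv
    have c2 : totalCost C t x' < totalCost C t (mv x' a b) := by
      rcases lt_or_ge (totalCost C t x') (totalCost C t (mv x' a b)) with h | h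
      · exact h
      · exfalso
        have hoptmv : IsOptimal f C t (d + 1) (mv x' a b) :=
          ⟨hx'mv, fun z hz => le_trans h (hopt.2 z hz)⟩
        have h1 := hmin _ hoptmv
        have h2 := l1_mv x x' hab ha hb
        omega
    rw [cost_mv C t x (Ne.symm hab)] at c1
    rw [cost_mv C t x' hab] at c2
    have r1 : C a (x' a + 1) (t a) - C a (x' a) (t a)
        ≤ C a (x a) (t a) - C a (x a - 1) (t a) := by
      have := reg_mono (hreg a) (t a) (a := x' a + 1) (b := x a) (by omega) (by omega)
      simpa using this
    have r2 : C b (x b + 1) (t b) - C b (x b) (t b)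
        ≤ C b (x' b) (t b) - C b (x' b - 1) (t b) := by
      have := reg_mono (hreg b) (t b) (a := x b + 1) (b := x' b) (by omega) (by omega)
      simpa using this
    linarith
  have h2 : ∑ e, ((x' e - x e) + x e) = ∑ e, x' e :=
    Finset.sum_congr rfl fun e _ => Nat.sub_add_cancel (hle e)
  rw [Finset.sum_add_distrib] at h2
  have h3 : l1 x x' = ∑ e, (x' e - x e) := by
    unfold l1
    apply Finset.sum_congr rfl
    intro e _
    have := hle e
    omega
  have hd1 := hx.1.2
  have hd2 := hopt.1.2
  omega

lemma step_d_down {f : Finset E → ℕ} (hf : IsPolymatroidRank f) {C : E → ℕ → ℕ → ℝ}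
    (hreg : ∀ e, Regular (C e)) {t : E → ℕ} {d : ℕ} {x : E → ℕ}
    (hx : IsOptimal f C t (d + 1) x) (hne : (Base f d).Nonempty) :
    ∃ x', IsOptimal f C t d x' ∧ l1 x x' ≤ 1 := by
  obtain ⟨x', hopt, hmin⟩ := exists_opt_min f C t d hne x
  refine ⟨x', hopt, ?_⟩
  have hle : ∀ e, x' e ≤ x e := by
    by_contra hc
    push_neg at hc
    obtain ⟨a, ha⟩ := hc
    -- ha : x a < x' a ; exch with u := x', v := x
    have hsum : ∑ e, x' e ≤ ∑ e, x e := by rw [hx.1.2, hopt.1.2]; omega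
    obtain ⟨b, hb, hbu, hbv⟩ := exch hf hopt.1.1 hx.1.1 hsum a ha
    -- hb : x' b < x b ; hbu : x'-tight U ∋ b → a ∈ U ; hbv : x-tight U ∋ a → b ∈ U
    have hab : a ≠ b := by intro h; subst h; omega
    have hx'a1 : 1 ≤ x' a := by omega
    have hxb1 : 1 ≤ x b := by omega
    -- moves : mv x' b a ∈ Base f d  and  mv x a b ∈ Base f (d+1)
    have hx'mv : mv x' b a ∈ Base f d :=
      ⟨mv_feas hopt.1.1 (Ne.symm hab) hx'a1 hbu,
        by rw [mv_sum_univ (Ne.symm hab) hx'a1]; exact hopt.1.2⟩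
    have hxmv : mv x a b ∈ Base f (d + 1) :=
      ⟨mv_feas hx.1.1 hab hxb1 hbv, by rw [mv_sum_univ hab hxb1]; exact hx.1.2⟩
    have c1 : totalCost C t x ≤ totalCost C t (mv x a b) := hx.2 _ hxmv
    have c2 : totalCost C t x' < totalCost C t (mv x' b a) := by
      rcases lt_or_ge (totalCost C t x') (totalCost C t (mv x' b a)) with h | h
      · exact h
      · exfalso
        have hoptmv : IsOptimal f C t d (mv x' b a) :=
          ⟨hx'mv, fun z hz => le_trans h (hopt.2 z hz)⟩
        have h1 := hmin _ hoptmv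
        have h2 := l1_mv x x' (Ne.symm hab) hb ha
        omega
    rw [cost_mv C t x hab] at c1
    rw [cost_mv C t x' (Ne.symm hab)] at c2
    -- c1 : cost x ≤ cost x + (C a (x a + 1) - C a (x a)) - (C b (x b) - C b (x b - 1))
    -- c2 : cost x' < cost x' + (C b (x' b + 1) - C b (x' b)) - (C a (x' a) - C a (x' a - 1))
    have r1 : C a (x a + 1) (t a) - C a (x a) (t a)
        ≤ C a (x' a) (t a) - C a (x' a - 1) (t a) := by
      have := reg_mono (hreg a) (t a) (a := x a + 1) (b := x' a) (by omega) (by omega)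
      simpa using this
    have r2 : C b (x' b + 1) (t b) - C b (x' b) (t b)
        ≤ C b (x b) (t b) - C b (x b - 1) (t b) := by
      have := reg_mono (hreg b) (t b) (a := x' b + 1) (b := x b) (by omega) (by omega)
      simpa using this
    linarith
  have h2 : ∑ e, ((x e - x' e) + x' e) = ∑ e, x e :=
    Finset.sum_congr rfl fun e _ => Nat.sub_add_cancel (hle e)
  rw [Finset.sum_add_distrib] at h2
  have h3 : l1 x x' = ∑ e, (x e - x' e) := by
    unfold l1
    apply Finset.sum_congr rfl
    intro e _
    have := hle e
    omega
  have hd1 := hx.1.2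
  have hd2 := hopt.1.2
  omega

lemma l1_comm (u v : E → ℕ) : l1 u v = l1 v u := by
  unfold l1
  exact Finset.sum_congr rfl fun e _ => by omega

lemma pick_gap {u v : E → ℕ} (g : E) (hsum : ∑ e, u e = ∑ e, v e) (hbig : 3 ≤ l1 u v) :
    ∃ a, v a < u a ∧ (a ≠ g ∨ v a + 2 ≤ u a) := by
  by_contra hc
  push_neg at hc
  have h3 : ∀ e ∈ (univ : Finset E),
      (((u e : ℤ) - v e).natAbs : ℤ) ≤ (v e : ℤ) - u e + (if e = g then 2 else 0) := by
    intro e _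
    by_cases heg : e = g
    · subst heg
      rw [if_pos rfl]
      by_cases hlt : v e < u e
      · have := (hc e hlt).2; omega
      · omega
    · simp only [heg, if_false]
      by_cases hlt : v e < u e
      · exact absurd (hc e hlt).1 heg
      · omega
  have hle := Finset.sum_le_sum h3
  rw [Finset.sum_add_distrib, Finset.sum_sub_distrib] at hle
  have hif : ∑ e, (if e = g then (2 : ℤ) else 0) = 2 := by
    rw [Finset.sum_ite_eq' univ g (fun _ => (2:ℤ))]
    simp
  have hl1 : (l1 u v : ℤ) = ∑ e, (((u e : ℤ) - v e).natAbs : ℤ) := by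
    unfold l1; push_cast; rfl
  have hsz : ∑ e, (v e : ℤ) - ∑ e, (u e : ℤ) = 0 := by
    have := congrArg (fun n : ℕ => (n : ℤ)) hsum
    push_cast at this
    omega
  omega

lemma step_t_up {f : Finset E → ℕ} (hf : IsPolymatroidRank f) {C : E → ℕ → ℕ → ℝ}
    (hreg : ∀ e, Regular (C e)) {t : E → ℕ} {d : ℕ} {x : E → ℕ} (g : E)
    (hx : IsOptimal f C t d x) :
    ∃ x', IsOptimal f C (Function.update t g (t g + 1)) d x' ∧ l1 x x' ≤ 2 := by
  set t' := Function.update t g (t g + 1) with ht'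
  have hne : (Base f d).Nonempty := ⟨x, hx.1⟩
  obtain ⟨x', hopt, hmin⟩ := exists_opt_min f C t' d hne x
  refine ⟨x', hopt, ?_⟩
  by_contra hbig
  push_neg at hbig
  have hsum : ∑ e, x e = ∑ e, x' e := by rw [hx.1.2, hopt.1.2]
  obtain ⟨a, haP, hag⟩ := pick_gap g hsum (by omega)
  obtain ⟨b, hb, hbu, hbv⟩ := exch hf hx.1.1 hopt.1.1 (le_of_eq hsum) a haP
  have hab : a ≠ b := by intro h; subst h; omega
  have hxa1 : 1 ≤ x a := by omega
  have hx'b1 : 1 ≤ x' b := by omega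
  have hxmv : mv x b a ∈ Base f d :=
    ⟨mv_feas hx.1.1 (Ne.symm hab) hxa1 hbu,
      by rw [mv_sum_univ (Ne.symm hab) hxa1]; exact hx.1.2⟩
  have hx'mv : mv x' a b ∈ Base f d :=
    ⟨mv_feas hopt.1.1 hab hx'b1 hbv, by rw [mv_sum_univ hab hx'b1]; exact hopt.1.2⟩
  have c1 : totalCost C t x ≤ totalCost C t (mv x b a) := hx.2 _ hxmv
  have c2 : totalCost C t' x' < totalCost C t' (mv x' a b) := by
    rcases lt_or_ge (totalCost C t' x') (totalCost C t' (mv x' a b)) with h | h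
    · exact h
    · exfalso
      have hoptmv : IsOptimal f C t' d (mv x' a b) :=
        ⟨hx'mv, fun z hz => le_trans h (hopt.2 z hz)⟩
      have h1 := hmin _ hoptmv
      have h2 := l1_mv x x' hab haP hb
      omega
  rw [cost_mv C t x (Ne.symm hab)] at c1
  rw [cost_mv C t' x' hab] at c2
  have r1 : C a (x' a + 1) (t' a) - C a (x' a) (t' a)
      ≤ C a (x a) (t a) - C a (x a - 1) (t a) := by
    by_cases hagg : a = g
    · subst hagg
      have hgap : x' a + 2 ≤ x a := by
        rcases hag with h | h
        · exact absurd rfl h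
        · exact h
      have hta : t' a = t a + 1 := by rw [ht']; simp
      rw [hta]
      have s1 := (hreg a (x' a + 1) (t a) (by omega)).2
      simp only [Nat.add_sub_cancel] at s1
      rw [show x' a + 1 + 1 = x' a + 2 from rfl] at s1
      have s2 := reg_mono (hreg a) (t a) (a := x' a + 2) (b := x a) (by omega) hgap
      rw [show x' a + 2 - 1 = x' a + 1 from rfl] at s2
      linarith
    · have hta : t' a = t a := by rw [ht']; exact Function.update_of_ne hagg _ _
      rw [hta]
      have := reg_mono (hreg a) (t a) (a := x' a + 1) (b := x a) (by omega) (by omega)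
      simpa using this
  have r2 : C b (x b + 1) (t b) - C b (x b) (t b)
      ≤ C b (x' b) (t' b) - C b (x' b - 1) (t' b) := by
    by_cases hbgg : b = g
    · subst hbgg
      have htb : t' b = t b + 1 := by rw [ht']; simp
      rw [htb]
      have s1 := reg_mono (hreg b) (t b) (a := x b + 1) (b := x' b) (by omega) (by omega)
      simp only [Nat.add_sub_cancel] at s1
      have s2 := (hreg b (x' b) (t b) hx'b1).1
      linarith
    · have htb : t' b = t b := by rw [ht']; exact Function.update_of_ne hbgg _ _
      rw [htb]
      have := reg_mono (hreg b) (t b) (a := x b + 1) (b := x' b) (by omega) (by omega)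
      simpa using this
  linarith

lemma step_t_down {f : Finset E → ℕ} (hf : IsPolymatroidRank f) {C : E → ℕ → ℕ → ℝ}
    (hreg : ∀ e, Regular (C e)) {t : E → ℕ} {d : ℕ} {x : E → ℕ} (g : E) (hg : 1 ≤ t g)
    (hx : IsOptimal f C t d x) :
    ∃ x', IsOptimal f C (Function.update t g (t g - 1)) d x' ∧ l1 x x' ≤ 2 := by
  set t' := Function.update t g (t g - 1) with ht'
  have hne : (Base f d).Nonempty := ⟨x, hx.1⟩
  obtain ⟨x', hopt, hmin⟩ := exists_opt_min f C t' d hne x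
  refine ⟨x', hopt, ?_⟩
  by_contra hbig
  push_neg at hbig
  have hsum : ∑ e, x' e = ∑ e, x e := by rw [hx.1.2, hopt.1.2]
  have hbig' : 3 ≤ l1 x' x := by rw [l1_comm]; omega
  obtain ⟨a, haP, hag⟩ := pick_gap g hsum hbig'
  -- haP : x a < x' a, hag : a ≠ g ∨ x a + 2 ≤ x' a
  obtain ⟨b, hb, hbu, hbv⟩ := exch hf hopt.1.1 hx.1.1 (le_of_eq hsum) a haP
  -- hb : x' b < x b, hbu : x'-tight U ∋ b → a ∈ U, hbv : x-tight U ∋ a → b ∈ U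
  have hab : a ≠ b := by intro h; subst h; omega
  have hx'a1 : 1 ≤ x' a := by omega
  have hxb1 : 1 ≤ x b := by omega
  have hx'mv : mv x' b a ∈ Base f d :=
    ⟨mv_feas hopt.1.1 (Ne.symm hab) hx'a1 hbu,
      by rw [mv_sum_univ (Ne.symm hab) hx'a1]; exact hopt.1.2⟩
  have hxmv : mv x a b ∈ Base f d :=
    ⟨mv_feas hx.1.1 hab hxb1 hbv, by rw [mv_sum_univ hab hxb1]; exact hx.1.2⟩
  have c1 : totalCost C t x ≤ totalCost C t (mv x a b) := hx.2 _ hxmv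
  have c2 : totalCost C t' x' < totalCost C t' (mv x' b a) := by
    rcases lt_or_ge (totalCost C t' x') (totalCost C t' (mv x' b a)) with h | h
    · exact h
    · exfalso
      have hoptmv : IsOptimal f C t' d (mv x' b a) :=
        ⟨hx'mv, fun z hz => le_trans h (hopt.2 z hz)⟩
      have h1 := hmin _ hoptmv
      have h2 := l1_mv x x' (Ne.symm hab) hb haP
      omega
  rw [cost_mv C t x hab] at c1
  rw [cost_mv C t' x' (Ne.symm hab)] at c2
  -- c1 : 0 ≤ (C a (x a + 1) - C a (x a)) - (C b (x b) - C b (x b - 1))  at t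
  -- c2 : 0 < (C b (x' b + 1) - C b (x' b)) - (C a (x' a) - C a (x' a - 1))  at t'
  have r1 : C b (x' b + 1) (t' b) - C b (x' b) (t' b)
      ≤ C b (x b) (t b) - C b (x b - 1) (t b) := by
    by_cases hbgg : b = g
    · subst hbgg
      have htb : t' b = t b - 1 := by rw [ht']; simp
      rw [htb]
      have s1 := (hreg b (x' b + 1) (t b - 1) (by omega)).1
      simp only [Nat.add_sub_cancel] at s1
      rw [Nat.sub_add_cancel hg] at s1
      have s2 := reg_mono (hreg b) (t b) (a := x' b + 1) (b := x b) (by omega) (by omega)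
      simp only [Nat.add_sub_cancel] at s2
      linarith
    · have htb : t' b = t b := by rw [ht']; exact Function.update_of_ne hbgg _ _
      rw [htb]
      have := reg_mono (hreg b) (t b) (a := x' b + 1) (b := x b) (by omega) (by omega)
      simpa using this
  have r2 : C a (x a + 1) (t a) - C a (x a) (t a)
      ≤ C a (x' a) (t' a) - C a (x' a - 1) (t' a) := by
    by_cases hagg : a = g
    · subst hagg
      have hgap : x a + 2 ≤ x' a := by
        rcases hag with h | h
        · exact absurd rfl h
        · exact h
      have hta : t' a = t a - 1 := by rw [ht']; simp
      rw [hta]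
      have s1 := (hreg a (x a + 1) (t a - 1) (by omega)).2
      simp only [Nat.add_sub_cancel] at s1
      rw [Nat.sub_add_cancel hg] at s1
      rw [show x a + 1 + 1 = x a + 2 from rfl] at s1
      have s2 := reg_mono (hreg a) (t a - 1) (a := x a + 2) (b := x' a) (by omega) hgap
      rw [show x a + 2 - 1 = x a + 1 from rfl] at s2
      linarith
    · have hta : t' a = t a := by rw [ht']; exact Function.update_of_ne hagg _ _
      rw [hta]
      have := reg_mono (hreg a) (t a) (a := x a + 1) (b := x' a) (by omega) (by omega)
      simpa using this
  linarith

lemma l1_self (u : E → ℕ) : l1 u u = 0 := by unfold l1; simp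

lemma walk_up {f : Finset E → ℕ} (hf : IsPolymatroidRank f) {C : E → ℕ → ℕ → ℝ}
    (hreg : ∀ e, Regular (C e)) {t : E → ℕ} (k : ℕ) :
    ∀ {d : ℕ} {x : E → ℕ}, IsOptimal f C t d x → (Base f (d + k)).Nonempty →
      ∃ x', IsOptimal f C t (d + k) x' ∧ l1 x x' ≤ k := by
  induction k with
  | zero => intro d x hx _; exact ⟨x, hx, by simp [l1_self]⟩
  | succ k ih =>
    intro d x hx hne
    have hk : (Base f (d + k)).Nonempty := base_nonempty_mono f (by omega) hne
    obtain ⟨x1, h1, hd1⟩ := ih hx hk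
    obtain ⟨x', h', hd2⟩ := step_d_up hf hreg h1 hne
    exact ⟨x', h', le_trans (l1_triangle x x1 x') (by omega)⟩

lemma walk_down {f : Finset E → ℕ} (hf : IsPolymatroidRank f) {C : E → ℕ → ℕ → ℝ}
    (hreg : ∀ e, Regular (C e)) {t : E → ℕ} (k : ℕ) :
    ∀ {d : ℕ} {x : E → ℕ}, IsOptimal f C t (d + k) x →
      ∃ x', IsOptimal f C t d x' ∧ l1 x x' ≤ k := by
  induction k with
  | zero => intro d x hx; exact ⟨x, hx, by simp [l1_self]⟩
  | succ k ih =>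
    intro d x hx
    have hk : (Base f (d + k)).Nonempty := base_nonempty_mono f (by omega) ⟨x, hx.1⟩
    obtain ⟨x1, h1, hd1⟩ := step_d_down hf hreg hx hk
    obtain ⟨x', h', hd2⟩ := ih h1
    exact ⟨x', h', le_trans (l1_triangle x x1 x') (by omega)⟩

lemma l1_update_plus {t t' : E → ℕ} {g : E} (h : t g < t' g) :
    l1 (Function.update t g (t g + 1)) t' + 1 = l1 t t' := by
  have h1 : ∑ e ∈ univ.erase g, ((Function.update t g (t g + 1) e : ℤ) - t' e).natAbs
      = ∑ e ∈ univ.erase g, ((t e : ℤ) - t' e).natAbs := by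
    apply Finset.sum_congr rfl
    intro e he
    rw [Function.update_of_ne (Finset.ne_of_mem_erase he)]
  have h2 := Finset.sum_erase_add univ
    (fun e => ((Function.update t g (t g + 1) e : ℤ) - t' e).natAbs) (Finset.mem_univ g)
  have h3 := Finset.sum_erase_add univ
    (fun e => ((t e : ℤ) - t' e).natAbs) (Finset.mem_univ g)
  have h4 : Function.update t g (t g + 1) g = t g + 1 := Function.update_self _ _ _
  have h5 : ((Function.update t g (t g + 1) g : ℤ) - t' g).natAbs + 1
      = ((t g : ℤ) - t' g).natAbs := by
    rw [h4]; push_cast; omega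
  unfold l1
  omega

lemma l1_update_minus {t t' : E → ℕ} {g : E} (h : t' g < t g) :
    l1 (Function.update t g (t g - 1)) t' + 1 = l1 t t' := by
  have h1 : ∑ e ∈ univ.erase g, ((Function.update t g (t g - 1) e : ℤ) - t' e).natAbs
      = ∑ e ∈ univ.erase g, ((t e : ℤ) - t' e).natAbs := by
    apply Finset.sum_congr rfl
    intro e he
    rw [Function.update_of_ne (Finset.ne_of_mem_erase he)]
  have h2 := Finset.sum_erase_add univ
    (fun e => ((Function.update t g (t g - 1) e : ℤ) - t' e).natAbs) (Finset.mem_univ g)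
  have h3 := Finset.sum_erase_add univ
    (fun e => ((t e : ℤ) - t' e).natAbs) (Finset.mem_univ g)
  have hg : 1 ≤ t g := by omega
  have h4 : Function.update t g (t g - 1) g = t g - 1 := Function.update_self _ _ _
  have h5 : ((Function.update t g (t g - 1) g : ℤ) - t' g).natAbs + 1
      = ((t g : ℤ) - t' g).natAbs := by
    rw [h4]; push_cast [hg]; omega
  unfold l1
  omega

lemma walk_t {f : Finset E → ℕ} (hf : IsPolymatroidRank f) {C : E → ℕ → ℕ → ℝ}
    (hreg : ∀ e, Regular (C e)) {d : ℕ} (t' : E → ℕ) (n : ℕ) :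
    ∀ (t : E → ℕ) (x : E → ℕ), l1 t t' = n → IsOptimal f C t d x →
      ∃ x', IsOptimal f C t' d x' ∧ l1 x x' ≤ 2 * n := by
  induction n with
  | zero =>
    intro t x hn hx
    have := l1_eq_zero hn
    subst this
    exact ⟨x, hx, by simp [l1_self]⟩
  | succ n ih =>
    intro t x hn hx
    have hg : ∃ g, t g ≠ t' g := by
      by_contra hcc
      push_neg at hcc
      have : t = t' := funext hcc
      rw [this, l1_self] at hn
      omega
    obtain ⟨g, hgne⟩ := hg
    rcases Nat.lt_or_ge (t g) (t' g) with hlt | hge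
    · obtain ⟨x1, h1, hd1⟩ := step_t_up hf hreg g hx
      have hstep := l1_update_plus (t' := t') hlt
      obtain ⟨x', h', hd2⟩ := ih (Function.update t g (t g + 1)) x1 (by omega) h1
      exact ⟨x', h', le_trans (l1_triangle x x1 x') (by omega)⟩
    · have hlt : t' g < t g := by omega
      have htg : 1 ≤ t g := by omega
      obtain ⟨x1, h1, hd1⟩ := step_t_down hf hreg g htg hx
      have hstep := l1_update_minus (t' := t') hlt
      obtain ⟨x', h', hd2⟩ := ih (Function.update t g (t g - 1)) x1 (by omega) h1
      exact ⟨x', h', le_trans (l1_triangle x x1 x') (by omega)⟩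


end Aux

/-- **General sensitivity bound.** Let `f` be an integral polymatroid rank function and all
`C_e` nonnegative and regular. For `t, t' ∈ ℕ^E` and `d, d' ∈ ℕ` with `B_f(d) ≠ ∅ ≠ B_f(d')`,
for every optimal solution `x` of `P(t,d)` there is an optimal solution `x'` of `P(t',d')`
with `‖x - x'‖ ≤ 2‖t - t'‖ + |d - d'|`. -/
theorem general_sensitivity_bound {E : Type*} [Fintype E] [DecidableEq E] [Nonempty E]
    (f : Finset E → ℕ) (hf : IsPolymatroidRank f)
    (C : E → ℕ → ℕ → ℝ) (hC0 : ∀ e x t, 0 ≤ C e x t)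
    (hreg : ∀ e, Regular (C e))
    (t t' : E → ℕ) (d d' : ℕ)
    (hBd : (Base f d).Nonempty) (hBd' : (Base f d').Nonempty)
    (x : E → ℕ) (hx : IsOptimal f C t d x) :
    ∃ x' : E → ℕ, IsOptimal f C t' d' x' ∧
      l1 x x' ≤ 2 * l1 t t' + ((d : ℤ) - (d' : ℤ)).natAbs := by
  have hphase1 : ∃ x1, IsOptimal f C t d' x1 ∧ l1 x x1 ≤ ((d : ℤ) - (d' : ℤ)).natAbs := by
    rcases le_or_gt d d' with h | h
    · have hdd : d + (d' - d) = d' := by omega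
      obtain ⟨x1, h1, hd1⟩ := walk_up hf hreg (d' - d) hx (by rw [hdd]; exact hBd')
      rw [hdd] at h1
      exact ⟨x1, h1, by omega⟩
    · have hdd : d' + (d - d') = d := by omega
      obtain ⟨x1, h1, hd1⟩ := walk_down hf hreg (d - d') (by rw [hdd]; exact hx)
      exact ⟨x1, h1, by omega⟩
  obtain ⟨x1, h1, hd1⟩ := hphase1
  obtain ⟨x', h', hd2⟩ := walk_t hf hreg t' (l1 t t') t x1 rfl h1
  exact ⟨x', h', le_trans (l1_triangle x x1 x') (by omega)⟩
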